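/- Let β ∈ ℝ and u ∈ ℂ satisfy 4|u|² ≤ β², and set Ω := √(β² − 4|u|²) (the nonnegative real square root). Define, for λ ∈ ℂ, the 2×2 matrix K(λ) with entries K₁₁ = λ − iΩ, K₁₂ = 2i·conj(u), K₂₁ = 2iu, K₂₂ = λ + iΩ. Then K(λ)·K(−λ) = −(λ² + β²)·I for every λ ∈ ℂ, where I is the 2×2 identity matrix. -/

import Mathlib

open Complex Matrix ComplexConjugate

noncomputable section

/-- The dynamical boundary matrix `K(λ)` for the new integrable boundary conditions of
the even-order NLS equations, with boundary value `u` and real parameter `β`: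
`K₁₁ = λ − iΩ`, `K₁₂ = 2i conj(u)`, `K₂₁ = 2iu`, `K₂₂ = λ + iΩ`, where
`Ω = √(β² − 4|u|²)`. -/
def Keven (β : ℝ) (u : ℂ) (lam : ℂ) : Matrix (Fin 2) (Fin 2) ℂ :=
  !![lam - I * ((Real.sqrt (β ^ 2 - 4 * ‖u‖ ^ 2) : ℝ) : ℂ), 2 * I * conj u;
     2 * I * u, lam + I * ((Real.sqrt (β ^ 2 - 4 * ‖u‖ ^ 2) : ℝ) : ℂ)]

/-- The boundary matrix satisfies `K(λ)K(−λ) = −(λ² + β²) I`. -/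
theorem Keven_inversion (β : ℝ) (u : ℂ) (h : 4 * ‖u‖ ^ 2 ≤ β ^ 2) :
    ∀ lam : ℂ,
      Keven β u lam * Keven β u (-lam)
        = (-(lam ^ 2 + (β : ℂ) ^ 2)) • (1 : Matrix (Fin 2) (Fin 2) ℂ) := by
  intro lam
  have hΩ : ((Real.sqrt (β ^ 2 - 4 * ‖u‖ ^ 2) : ℝ) : ℂ) ^ 2
      = (β : ℂ) ^ 2 - 4 * (u * conj u) := by
    have h1 : Real.sqrt (β ^ 2 - 4 * ‖u‖ ^ 2) ^ 2
        = β ^ 2 - 4 * ‖u‖ ^ 2 := by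
      exact Real.sq_sqrt (by linarith)
    have h2 : (u * conj u) = ((‖u‖ ^ 2 : ℝ) : ℂ) := by
      rw [Complex.mul_conj, Complex.sq_norm]
    rw [h2, ← Complex.ofReal_pow, h1]
    push_cast
    ring
  ext i j
  fin_cases i <;> fin_cases j <;>
      simp [Keven, Matrix.mul_apply, Fin.sum_univ_two, Matrix.one_apply] <;>
      set w : ℂ := ((Real.sqrt (β ^ 2 - 4 * ‖u‖ ^ 2) : ℝ) : ℂ) with hw <;>
    first
      | ring1
      | linear_combination (w ^ 2 + 4 * (u * conj u)) * Complex.I_sq - hΩ
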